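/- arXiv:1004.4862 — 5 statements merged into one kernel-verified Lean document; each statement's English description precedes it below -/
import Mathlib

section
/- Under the above ergodicity and integrability assumptions (E|ln L|<∞, E|ln δ|<∞, E ln L<0), there exists a random variable γ(ω)>0 such that almost surely γ(ω)≤δ_0(ω) and L_t(ω)···L_1(ω)γ(ω)≤δ_t(ω) for all t=1,2,..., where L_t(ω)=L(T^{t-1}ω) and δ_t(ω)=δ(T^t ω). -/
/-!
Taking logarithms, the claim asks for `log γ ≤ log δ(T^t ω) - ∑_{i<t} log L(T^i ω)` for all `t`,
so `γ = exp (-log σ)` works as soon as the ergodic sums of `log L` minus `log δ ∘ T^t` are bounded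
above almost surely. Up to the constant `log δ(ω)` these are the ergodic sums of
`h = log L + log δ - log δ ∘ T`, whose mean `E log L` is negative. An ergodic sum of a function with
negative mean is a.s. bounded above: the set where it is bounded is invariant, hence null or
conull, and if it were null then Garsia's maximal ergodic inequality `∫_{max_{k ≤ n} S_k > 0} h ≥ 0`
would give `E h ≥ 0` in the limit `n → ∞`.
-/

open MeasureTheory Filter Finset Function Set

section BirkhoffMax

variable {α : Type*}

/-- `birkhoffMax f g n x = max_{k ≤ n} birkhoffSum f g k x`, in the recursive form that drives
Garsia's proof of the maximal ergodic inequality. -/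
noncomputable def birkhoffMax (f : α → α) (g : α → ℝ) : ℕ → α → ℝ
  | 0 => fun _ => 0
  | n + 1 => fun x => max 0 (g x + birkhoffMax f g n (f x))

variable (f : α → α) (g : α → ℝ)

theorem birkhoffMax_nonneg (n : ℕ) (x : α) : 0 ≤ birkhoffMax f g n x := by
  cases n with
  | zero => exact le_rfl
  | succ n => exact le_max_left _ _

theorem birkhoffMax_le_succ (n : ℕ) (x : α) : birkhoffMax f g n x ≤ birkhoffMax f g (n + 1) x := by
  induction n generalizing x with
  | zero => exact birkhoffMax_nonneg f g 1 x
  | succ n ih => exact max_le_max le_rfl (add_le_add le_rfl (ih (f x)))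

theorem birkhoffSum_le_birkhoffMax {k n : ℕ} (hk : k ≤ n) (x : α) :
    birkhoffSum f g k x ≤ birkhoffMax f g n x := by
  induction n generalizing k x with
  | zero => simp [Nat.le_zero.1 hk, birkhoffMax]
  | succ n ih =>
    cases k with
    | zero => exact birkhoffMax_nonneg f g _ x
    | succ k =>
      rw [birkhoffSum_succ']
      exact le_max_of_le_right (add_le_add le_rfl (ih (Nat.le_of_succ_le_succ hk) (f x)))

theorem birkhoffMax_sub_birkhoffMax_apply_le {n : ℕ} {x : α} (hx : 0 < birkhoffMax f g n x) :
    birkhoffMax f g n x - birkhoffMax f g n (f x) ≤ g x := by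
  cases n with
  | zero => exact absurd hx (lt_irrefl 0)
  | succ n =>
    have hpos : 0 < g x + birkhoffMax f g n (f x) := by
      by_contra! h
      exact hx.ne' (max_eq_left h)
    have hmono := birkhoffMax_le_succ f g n (f x)
    simp only [birkhoffMax, max_eq_right hpos.le] at hmono ⊢
    linarith

theorem preimage_setOf_bddAbove_birkhoffSum :
    f ⁻¹' {x | BddAbove (range fun n => birkhoffSum f g n x)} =
      {x | BddAbove (range fun n => birkhoffSum f g n x)} := by
  ext x
  simp only [Set.mem_preimage, Set.mem_ofPred_eq, bddAbove_def, forall_mem_range]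
  constructor
  · rintro ⟨C, hC⟩
    refine ⟨max 0 (g x + C), fun n => ?_⟩
    cases n with
    | zero => simp
    | succ n => exact birkhoffSum_succ' f g n x ▸ le_max_of_le_right (add_le_add le_rfl (hC n))
  · rintro ⟨C, hC⟩
    refine ⟨C - g x, fun n => ?_⟩
    have := hC (n + 1)
    rw [birkhoffSum_succ'] at this
    linarith

theorem birkhoffSum_sub_comp {G : Type*} [AddCommGroup G] (φ : α → G) (n : ℕ) (x : α) :
    birkhoffSum f (φ - φ ∘ f) n x = φ x - φ (f^[n] x) := by
  simp only [birkhoffSum, Pi.sub_apply, comp_apply, ← iterate_succ_apply' f]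
  exact sum_range_sub' (fun k => φ (f^[k] x)) n

end BirkhoffMax

section MaximalErgodic

variable {Ω : Type*} [MeasurableSpace Ω] {μ : Measure Ω} {T : Ω → Ω} {f : Ω → ℝ}

theorem MeasureTheory.MeasurePreserving.integral_comp_of_aestronglyMeasurable
    (hT : MeasurePreserving T μ μ) (hf : AEStronglyMeasurable f μ) :
    ∫ ω, f (T ω) ∂μ = ∫ ω, f ω ∂μ := by
  rw [← integral_map hT.measurable.aemeasurable (by rwa [hT.map_eq]), hT.map_eq]

theorem Measurable.birkhoffMax (hf : Measurable f) (hT : Measurable T) (n : ℕ) :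
    Measurable (birkhoffMax T f n) := by
  induction n with
  | zero => exact measurable_const
  | succ n ih => exact measurable_const.max (hf.add (ih.comp hT))

theorem MeasureTheory.MeasurePreserving.integrable_birkhoffMax [IsFiniteMeasure μ]
    (hT : MeasurePreserving T μ μ) (hf : Integrable f μ) (n : ℕ) :
    Integrable (birkhoffMax T f n) μ := by
  induction n with
  | zero => exact integrable_const 0
  | succ n ih => exact (integrable_const 0).sup (hf.add (hT.integrable_comp_of_integrable ih))

/-- Garsia's maximal ergodic inequality. -/
theorem MeasureTheory.MeasurePreserving.setIntegral_birkhoffMax_pos_nonneg [IsFiniteMeasure μ]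
    (hT : MeasurePreserving T μ μ) (hf : Measurable f) (hfi : Integrable f μ) (n : ℕ) :
    0 ≤ ∫ ω in {ω | 0 < birkhoffMax T f n ω}, f ω ∂μ := by
  set M := birkhoffMax T f n
  have hMi : Integrable M μ := hT.integrable_birkhoffMax hfi n
  have hMTi : Integrable (fun ω => M (T ω)) μ := hT.integrable_comp_of_integrable hMi
  have hE : MeasurableSet {ω | 0 < M ω} :=
    measurableSet_lt measurable_const (hf.birkhoffMax hT.measurable n)
  have hM_eq : ∫ ω in {ω | 0 < M ω}, M ω ∂μ = ∫ ω, M ω ∂μ :=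
    setIntegral_eq_integral_of_forall_compl_eq_zero fun ω hω =>
      le_antisymm (not_lt.1 hω) (birkhoffMax_nonneg T f n ω)
  have hMT_le : ∫ ω in {ω | 0 < M ω}, M (T ω) ∂μ ≤ ∫ ω, M (T ω) ∂μ :=
    setIntegral_le_integral hMTi (Eventually.of_forall fun ω => birkhoffMax_nonneg T f n (T ω))
  calc 0 = ∫ ω, M ω ∂μ - ∫ ω, M (T ω) ∂μ := by
        rw [hT.integral_comp_of_aestronglyMeasurable hMi.aestronglyMeasurable, sub_self]
    _ ≤ ∫ ω in {ω | 0 < M ω}, M ω - M (T ω) ∂μ := by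
        rw [integral_sub hMi.integrableOn hMTi.integrableOn, hM_eq]
        linarith
    _ ≤ ∫ ω in {ω | 0 < M ω}, f ω ∂μ :=
        setIntegral_mono_on (hMi.sub hMTi).integrableOn hfi.integrableOn hE
          fun ω hω => birkhoffMax_sub_birkhoffMax_apply_le T f hω

theorem MeasureTheory.MeasurePreserving.integral_nonneg_of_ae_not_bddAbove_birkhoffSum
    [IsFiniteMeasure μ] (hT : MeasurePreserving T μ μ) (hf : Measurable f) (hfi : Integrable f μ)
    (h : ∀ᵐ ω ∂μ, ¬BddAbove (range fun n => birkhoffSum T f n ω)) :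
    0 ≤ ∫ ω, f ω ∂μ := by
  set E : ℕ → Set Ω := fun n => {ω | 0 < birkhoffMax T f n ω}
  have hE : ∀ n, MeasurableSet (E n) := fun n =>
    measurableSet_lt measurable_const (hf.birkhoffMax hT.measurable n)
  have hE_mono : Monotone E := monotone_nat_of_le_succ fun n ω hω =>
    hω.trans_le (birkhoffMax_le_succ T f n ω)
  have hE_univ : ⋃ n, E n =ᵐ[μ] (univ : Set Ω) := by
    refine ae_eq_univ.2 (measure_mono_null (fun ω hω => ?_) (ae_iff.1 h))
    simp only [mem_compl_iff, mem_iUnion, not_exists] at hω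
    refine not_not.2 ⟨0, ?_⟩
    rintro _ ⟨n, rfl⟩
    exact (birkhoffSum_le_birkhoffMax T f le_rfl ω).trans (not_lt.1 (hω n))
  have hlim := tendsto_setIntegral_of_monotone hE hE_mono hfi.integrableOn
  rw [setIntegral_congr_set hE_univ, setIntegral_univ] at hlim
  exact ge_of_tendsto' hlim fun n => hT.setIntegral_birkhoffMax_pos_nonneg hf hfi n

theorem Ergodic.ae_bddAbove_birkhoffSum [IsFiniteMeasure μ] (hT : Ergodic T μ)
    (hf : Measurable f) (hfi : Integrable f μ) (hneg : ∫ ω, f ω ∂μ < 0) :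
    ∀ᵐ ω ∂μ, BddAbove (range fun n => birkhoffSum T f n ω) := by
  have hG : MeasurableSet {ω | BddAbove (range fun n => birkhoffSum T f n ω)} :=
    measurableSet_bddAbove_range fun n =>
      Finset.measurable_sum _ fun k _ => hf.comp (hT.measurable.iterate k)
  rcases hT.measure_self_or_compl_eq_zero hG (preimage_setOf_bddAbove_birkhoffSum T f) with h | h
  · exact absurd (hT.toMeasurePreserving.integral_nonneg_of_ae_not_bddAbove_birkhoffSum hf hfi
      (measure_eq_zero_iff_ae_notMem.1 h)) hneg.not_ge
  · exact h

theorem Ergodic.ae_bddAbove_birkhoffSum_sub_comp_iterate [IsFiniteMeasure μ] (hT : Ergodic T μ)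
    (hf : Measurable f) (hfi : Integrable f μ) (hneg : ∫ ω, f ω ∂μ < 0)
    {g : Ω → ℝ} (hg : Measurable g) (hgi : Integrable g μ) :
    ∀ᵐ ω ∂μ, BddAbove (range fun n => birkhoffSum T f n ω - g (T^[n] ω)) := by
  have hgTi : Integrable (g ∘ T) μ := hT.toMeasurePreserving.integrable_comp_of_integrable hgi
  have hcob : ∫ ω, (g - g ∘ T) ω ∂μ = 0 := by
    rw [Pi.sub_def, integral_sub hgi hgTi, comp_def,
      hT.toMeasurePreserving.integral_comp_of_aestronglyMeasurable hgi.aestronglyMeasurable,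
      sub_self]
  have hneg' : ∫ ω, (f + (g - g ∘ T)) ω ∂μ < 0 := by
    rwa [Pi.add_def, integral_add hfi (hgi.sub hgTi), hcob, add_zero]
  filter_upwards [hT.ae_bddAbove_birkhoffSum (hf.add (hg.sub (hg.comp hT.measurable)))
    (hfi.add (hgi.sub hgTi)) hneg'] with ω ⟨C, hC⟩
  refine ⟨C - g ω, ?_⟩
  rintro _ ⟨n, rfl⟩
  have := hC ⟨n, rfl⟩
  simp only [birkhoffSum_add', birkhoffSum_sub_comp] at this
  linarith

end MaximalErgodic

section Sigma

variable {Ω : Type*} {T : Ω → Ω} {L δ : Ω → ℝ}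

/-- The logarithm of the paper's `σ(ω) = sup_t L_t⋯L_1 / δ_t`. -/
noncomputable def logSigma (T : Ω → Ω) (L δ : Ω → ℝ) (ω : Ω) : ℝ :=
  ⨆ t, birkhoffSum T (fun x => Real.log (L x)) t ω - Real.log (δ (T^[t] ω))

theorem Measurable.logSigma [MeasurableSpace Ω] (hT : Measurable T) (hL : Measurable L)
    (hδ : Measurable δ) : Measurable (logSigma T L δ) :=
  Measurable.iSup fun t => (Finset.measurable_sum _ fun k _ => hL.log.comp (hT.iterate k)).sub
    (hδ.log.comp (hT.iterate t))

theorem prod_mul_exp_neg_logSigma_le (hL : ∀ ω, 0 < L ω) (hδ : ∀ ω, 0 < δ ω) {ω : Ω}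
    (hbdd : BddAbove (range fun t =>
      birkhoffSum T (fun x => Real.log (L x)) t ω - Real.log (δ (T^[t] ω))))
    (t : ℕ) : (∏ i ∈ range t, L (T^[i] ω)) * Real.exp (-logSigma T L δ ω) ≤ δ (T^[t] ω) := by
  have hle := le_ciSup hbdd t
  have hprod : ∏ i ∈ range t, L (T^[i] ω) =
      Real.exp (birkhoffSum T (fun x => Real.log (L x)) t ω) := by
    rw [birkhoffSum, Real.exp_sum]
    exact prod_congr rfl fun i _ => (Real.exp_log (hL _)).symm
  rw [hprod, ← Real.exp_add, ← Real.exp_log (hδ (T^[t] ω))]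
  exact Real.exp_le_exp.2 (by rw [logSigma]; linarith)

end Sigma

/-- Existence of a random variable `γ > 0` with `γ ≤ δ_0` and `L_t⋯L_1 γ ≤ δ_t` a.s. -/
theorem stmt2 {Ω : Type*} [MeasurableSpace Ω] (μ : Measure Ω) [IsProbabilityMeasure μ]
    (T : Ω → Ω) (hT : Ergodic T μ)
    (L δ : Ω → ℝ) (hLmeas : Measurable L) (hδmeas : Measurable δ)
    (hLpos : ∀ ω, 0 < L ω) (hδpos : ∀ ω, 0 < δ ω)
    (hLint : Integrable (fun ω => Real.log (L ω)) μ)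
    (hδint : Integrable (fun ω => Real.log (δ ω)) μ)
    (hLneg : ∫ ω, Real.log (L ω) ∂μ < 0) :
    ∃ γ : Ω → ℝ, Measurable γ ∧ (∀ ω, 0 < γ ω) ∧
      ∀ᵐ ω ∂μ, γ ω ≤ δ ω ∧
        ∀ t : ℕ, 1 ≤ t → (∏ i ∈ Finset.range t, L (T^[i] ω)) * γ ω ≤ δ (T^[t] ω) := by
  refine ⟨fun ω => Real.exp (-logSigma T L δ ω),
    (hT.measurable.logSigma hLmeas hδmeas).neg.exp, fun ω => Real.exp_pos _, ?_⟩
  filter_upwards [hT.ae_bddAbove_birkhoffSum_sub_comp_iterate hLmeas.log hLint hLneg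
    hδmeas.log hδint] with ω hω
  have key := prod_mul_exp_neg_logSigma_le hLpos hδpos hω
  exact ⟨by simpa using key 0, fun t _ => key t⟩
end

section
/- (Interpolation lemma for Theorem 2). Suppose along the subsequence t(n)=nM the distances ρ_n(ω):=ρ(x_{t(n)}^a(ω), x̄_{t(n)}(ω)) satisfy limsup_n (1/t(n)) ln ρ_n ≤ c < 0 a.s., the random variables κ_n(ω):=κ(T^{t(n)}ω) satisfy E|ln κ|<∞, and the Hölder bound ρ(C_t(x,T^{t(n)}ω), x̄_{t(n)+t}(ω)) ≤ H(T^{t(n)}ω) ρ(x, x̄_{t(n)}(ω))^b holds for 0≤t≤M whenever ρ(x,x̄_{t(n)}(ω))≤κ_n(ω), with E|ln H|<∞. Then a.s. limsup_{t→∞}(1/t) ln ρ(x_t^a(ω), x̄_t(ω)) ≤ bc. -/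
/-!
Write `ℓ t = log ρ(x_t^a, x̄_t)`. Along the block `[nM, (n+1)M]` the Hölder bound gives
`ℓ (nM + s) ≤ log H_n + b ℓ(nM)` as soon as `ℓ(nM) ≤ log κ_n`. Since `log H` and `log κ` are
integrable and `T^{nM}` preserves `μ`, Borel–Cantelli gives `log H_n = o(n)` and
`log κ_n = o(n)` almost surely, while `ℓ(nM) ≤ c'nM` eventually for every `c' > c`; so the
condition holds eventually and `ℓ t ≤ n(ε + bc'M)` on the `n`-th block, whence the rate `bc`.
The distance never vanishes: a zero would propagate to all later block endpoints, forcing the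
`limsup` along `nM` to be `0`.
-/

open MeasureTheory Filter NNReal Asymptotics

theorem Real.isCoboundedUnder_le_and_isBoundedUnder_le_of_limsup_ne_zero {ι : Type*}
    {l : Filter ι} {u : ι → ℝ} (h : limsup u l ≠ 0) :
    l.IsCoboundedUnder (· ≤ ·) u ∧ l.IsBoundedUnder (· ≤ ·) u := by
  by_contra hu
  rcases not_and_or.1 hu with hu | hu <;> simp [hu] at h

section Blocks

variable {M : ℝ≥0}

theorem NNReal.floor_div_mul_le_and_le_add (hM : 0 < M) (t : ℝ≥0) :
    ⌊t / M⌋₊ * M ≤ t ∧ t ≤ ⌊t / M⌋₊ * M + M := by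
  constructor
  · exact (le_div_iff₀ hM).1 (Nat.floor_le zero_le)
  · rw [← add_one_mul, ← div_le_iff₀ hM]
    exact (Nat.lt_floor_add_one _).le

theorem NNReal.eventually_atTop_of_eventually_blocks (hM : 0 < M) {P : ℝ≥0 → Prop}
    (h : ∀ᶠ n : ℕ in atTop, ∀ s ≤ M, P (n * M + s)) : ∀ᶠ t in atTop, P t := by
  have hfloor : Tendsto (fun t : ℝ≥0 => ⌊t / M⌋₊) atTop atTop :=
    tendsto_nat_floor_atTop.comp (tendsto_id.atTop_div_const hM)
  filter_upwards [hfloor.eventually h] with t ht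
  obtain ⟨hle, hle_add⟩ := NNReal.floor_div_mul_le_and_le_add hM t
  simpa only [add_tsub_cancel_of_le hle] using
    ht (t - ⌊t / M⌋₊ * M) (tsub_le_iff_left.2 hle_add)

theorem NNReal.eventually_div_lt_of_eventually_blocks {ℓ : ℝ≥0 → ℝ} (hM : 0 < M) {A y : ℝ}
    (hA : A ≤ 0) (hy : A / M < y) (h : ∀ᶠ n : ℕ in atTop, ∀ s ≤ M, ℓ (n * M + s) ≤ n * A) :
    ∀ᶠ t in atTop, ℓ t / t < y := by
  have hratio : Tendsto (fun n : ℕ => n * A / ((n + 1) * M)) atTop (nhds (A / M)) := by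
    have := (tendsto_natCast_div_add_atTop (1 : ℝ)).mul_const (A / M)
    rw [one_mul] at this
    exact this.congr fun n => by rw [div_mul_div_comm]
  refine NNReal.eventually_atTop_of_eventually_blocks hM ?_
  filter_upwards [h, hratio.eventually_lt_const hy, eventually_gt_atTop 0] with n hn hlt hn0 s hs
  have hMpos : (0 : ℝ) < M := hM
  have ht : (0 : ℝ) < n * M + s := by positivity
  have ht_le : (n * M + s : ℝ) ≤ (n + 1) * M := by
    have : (s : ℝ) ≤ M := hs
    linarith
  push_cast
  calc ℓ (n * M + s) / (n * M + s) ≤ n * A / (n * M + s) := by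
        gcongr; exact hn s hs
    _ ≤ n * A / ((n + 1) * M) := by
        rw [div_le_div_iff₀ ht (by positivity)]
        exact mul_le_mul_of_nonpos_left ht_le (mul_nonpos_of_nonneg_of_nonpos n.cast_nonneg hA)
    _ < y := hlt

end Blocks

section Interpolation

variable {ℓ : ℝ≥0 → ℝ} {M : ℝ≥0} {b c : ℝ} {h k : ℕ → ℝ}

theorem eventually_div_lt_of_blockwise_holder (hM : 0 < M) (hb : 0 < b) (hc : c < 0)
    (hh : h =o[atTop] (fun n => (n : ℝ))) (hk : k =o[atTop] (fun n => (n : ℝ)))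
    (hsub : ∀ c' > c, ∀ᶠ n : ℕ in atTop, ℓ (n * M) / ((n : ℝ) * M) < c')
    (hblock : ∀ n : ℕ, ℓ (n * M) ≤ k n → ∀ s ≤ M, ℓ (n * M + s) ≤ h n + b * ℓ (n * M)) :
    ∀ y > b * c, ∀ᶠ t in atTop, ℓ t / t < y := by
  intro y hy
  have hMpos : (0 : ℝ) < M := hM
  obtain ⟨y', hbc, hy'⟩ := exists_between (lt_min hy (mul_neg_of_pos_of_neg hb hc))
  have hy'0 : y' < 0 := hy'.trans_le (min_le_right _ _)
  obtain ⟨c', hcc', hc'⟩ := exists_between ((lt_div_iff₀' hb).2 hbc)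
  have hbc' : b * c' < y' := (lt_div_iff₀' hb).1 hc'
  have hc'0 : c' < 0 := hc'.trans (div_neg_of_neg_of_pos hy'0 hb)
  set ε := M * (y' - b * c') / 2 with hεdef
  have hε : 0 < ε := by have := sub_pos.2 hbc'; positivity
  refine (NNReal.eventually_div_lt_of_eventually_blocks hM (A := ε + b * (c' * M)) ?_ ?_
    ?_).mono fun t ht => ht.trans_le (hy'.trans_le (min_le_left _ _)).le
  · rw [hεdef]
    nlinarith [mul_neg_of_pos_of_neg hMpos (by linarith : y' + b * c' < 0)]
  · rw [div_lt_iff₀ hMpos, hεdef]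
    nlinarith [mul_pos hMpos (sub_pos.2 hbc')]
  have hkM : 0 < -(c' * M) := neg_pos.2 (mul_neg_of_neg_of_pos hc'0 hMpos)
  filter_upwards [hsub c' hcc', isLittleO_iff.1 hh hε, isLittleO_iff.1 hk hkM,
    eventually_gt_atTop 0] with n hn hhn hkn hn0 s hs
  simp only [Real.norm_eq_abs, Nat.abs_cast] at hhn hkn
  have hℓ : ℓ (n * M) ≤ c' * M * n := by
    have := (div_lt_iff₀ (by positivity)).1 hn
    linarith
  have hℓk : ℓ (n * M) ≤ k n := by
    have := neg_abs_le (k n)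
    linarith
  calc ℓ (n * M + s) ≤ h n + b * ℓ (n * M) := hblock n hℓk s hs
    _ ≤ ε * n + b * (c' * M * n) := by
        gcongr
        exact (le_abs_self _).trans hhn
    _ = n * (ε + b * (c' * M)) := by ring

theorem limsup_div_le_mul_of_blockwise_holder (hM : 0 < M) (hb : 0 < b) (hc : c < 0)
    (hh : h =o[atTop] (fun n => (n : ℝ))) (hk : k =o[atTop] (fun n => (n : ℝ)))
    (hsub : limsup (fun n : ℕ => ℓ (n * M) / ((n : ℝ) * M)) atTop ≤ c)
    (hblock : ∀ n : ℕ, ℓ (n * M) ≤ k n → ∀ s ≤ M, ℓ (n * M + s) ≤ h n + b * ℓ (n * M)) :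
    limsup (fun t : ℝ≥0 => ℓ t / t) atTop ≤ b * c := by
  obtain ⟨hcobdd, hbdd⟩ :=
    Real.isCoboundedUnder_le_and_isBoundedUnder_le_of_limsup_ne_zero (hsub.trans_lt hc).ne
  have hcobdd' : atTop.IsCoboundedUnder (· ≤ ·) fun t : ℝ≥0 => ℓ t / t := by
    refine hcobdd.mono (le_of_eq_of_le ?_
      (map_mono (tendsto_natCast_atTop_atTop.atTop_mul_const hM)))
    rw [map_map]
    rfl
  have key := eventually_div_lt_of_blockwise_holder hM hb hc hh hk
    ((limsup_le_iff hcobdd hbdd).1 hsub) hblock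
  exact (limsup_le_iff hcobdd' ⟨_, (key _ (lt_add_one _)).mono fun _ => le_of_lt⟩).2 key

end Interpolation

section BorelCantelli

variable {Ω : Type*} [MeasurableSpace Ω] {μ : Measure Ω} [IsProbabilityMeasure μ]
  {S : ℕ → Ω → Ω} {g : Ω → ℝ}

theorem ae_eventually_abs_comp_le_natCast (hS : ∀ n, MeasurePreserving (S n) μ μ)
    (hg : Integrable g μ) : ∀ᵐ ω ∂μ, ∀ᶠ n : ℕ in atTop, |g (S n ω)| ≤ n := by
  -- `tsum_prob_mem_Ioi_lt_top` is stated for the `volume` of a `MeasureSpace`.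
  let : MeasureSpace Ω := ⟨μ⟩
  have hsum : ∑' n : ℕ, μ (S n ⁻¹' {ω | (n : ℝ) < |g ω|}) ≠ ⊤ := by
    simp_rw [fun n => (hS n).measure_preimage
      (nullMeasurableSet_lt aemeasurable_const hg.abs.aemeasurable)]
    exact (ProbabilityTheory.tsum_prob_mem_Ioi_lt_top hg.abs fun _ => abs_nonneg _).ne
  filter_upwards [ae_eventually_notMem hsum] with ω hω
  exact hω.mono fun n hn => not_lt.1 hn

theorem ae_isLittleO_natCast_of_measurePreserving (hS : ∀ n, MeasurePreserving (S n) μ μ)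
    (hg : Integrable g μ) :
    ∀ᵐ ω ∂μ, (fun n => g (S n ω)) =o[atTop] (fun n : ℕ => (n : ℝ)) := by
  have hk : ∀ k : ℕ, ∀ᵐ ω ∂μ, ∀ᶠ n : ℕ in atTop, |((k : ℝ) + 1) * g (S n ω)| ≤ n :=
    fun k => ae_eventually_abs_comp_le_natCast hS (hg.const_mul _)
  filter_upwards [ae_all_iff.2 hk] with ω hω
  refine isLittleO_iff.2 fun ε hε => ?_
  obtain ⟨k, hkε⟩ := exists_nat_one_div_lt hε
  filter_upwards [hω k] with n hn
  rw [abs_mul, abs_of_pos (by positivity : (0 : ℝ) < k + 1), ← le_div_iff₀' (by positivity)] at hn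
  simp only [Real.norm_eq_abs, Nat.abs_cast]
  calc |g (S n ω)| ≤ n / (k + 1) := hn
    _ = 1 / (k + 1) * n := by ring
    _ ≤ ε * n := by gcongr

end BorelCantelli

section Cocycle

variable {Ω X : Type*} {T : ℝ≥0 → Ω → Ω} {C : ℝ≥0 → X → Ω → X} {xbar : Ω → X}

theorem cocycle_eq_of_eq_of_le (hCadd : ∀ t s x ω, C (t + s) x ω = C s (C t x ω) (T t ω))
    {ω : Ω} {x : X} {s M : ℝ≥0} (hs : s ≤ M)
    (hinv : ∀ r ≤ M, C r (xbar ω) ω = xbar (T r ω)) (hx : C s x ω = xbar (T s ω)) :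
    C M x ω = xbar (T M ω) := by
  obtain ⟨r, rfl⟩ := exists_add_of_le hs
  rw [hCadd, hx, ← hinv s hs, ← hCadd, hinv _ le_rfl]

theorem cocycle_add_eq_of_add_eq (hTadd : ∀ t s, T (t + s) = T s ∘ T t)
    (hCadd : ∀ t s x ω, C (t + s) x ω = C s (C t x ω) (T t ω)) {a : X} {ω : Ω}
    {τ s M : ℝ≥0} (hs : s ≤ M)
    (hinv : ∀ r ≤ M, C r (xbar (T τ ω)) (T τ ω) = xbar (T r (T τ ω)))
    (h : C (τ + s) a ω = xbar (T (τ + s) ω)) : C (τ + M) a ω = xbar (T (τ + M) ω) := by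
  rw [hCadd, hTadd, Function.comp_apply] at h ⊢
  exact cocycle_eq_of_eq_of_le hCadd hs hinv h

theorem dist_pos_of_limsup_log_dist_ne_zero [MetricSpace X] (hTadd : ∀ t s, T (t + s) = T s ∘ T t)
    (hCadd : ∀ t s x ω, C (t + s) x ω = C s (C t x ω) (T t ω)) {M : ℝ≥0} (hM : 0 < M)
    {a : X} {ω : Ω}
    (hinv : ∀ n : ℕ, ∀ r ≤ M, C r (xbar (T (n * M) ω)) (T (n * M) ω) = xbar (T r (T (n * M) ω)))
    (hsub : limsup (fun n : ℕ => Real.log (dist (C (n * M) a ω) (xbar (T (n * M) ω))) /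
      ((n : ℝ) * M)) atTop ≠ 0) (t : ℝ≥0) :
    0 < dist (C t a ω) (xbar (T t ω)) := by
  refine dist_pos.2 fun ht => hsub ?_
  obtain ⟨hle, hle_add⟩ := NNReal.floor_div_mul_le_and_le_add hM t
  have hlater : ∀ m ≥ ⌊t / M⌋₊ + 1, C (m * M) a ω = xbar (T (m * M) ω) := by
    intro m hm
    induction m, hm using Nat.le_induction with
    | base =>
      push_cast [add_one_mul]
      refine cocycle_add_eq_of_add_eq hTadd hCadd (tsub_le_iff_left.2 hle_add) (hinv _) ?_
      rwa [add_tsub_cancel_of_le hle]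
    | succ m _ ih =>
      push_cast [add_one_mul]
      exact cocycle_add_eq_of_add_eq hTadd hCadd zero_le (hinv m) (by rwa [add_zero])
  rw [limsup_congr ((eventually_ge_atTop _).mono fun m hm => by
    rw [hlater m hm, dist_self, Real.log_zero, zero_div]), limsup_const]

end Cocycle

theorem stmt12_general {Ω : Type*} [MeasurableSpace Ω] (μ : Measure Ω) [IsProbabilityMeasure μ]
    {X : Type*} [MetricSpace X]
    (T : ℝ≥0 → Ω → Ω) (hTmp : ∀ t, MeasurePreserving (T t) μ μ)
    (hTadd : ∀ t s, T (t + s) = T s ∘ T t)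
    (C : ℝ≥0 → X → Ω → X)
    (hCadd : ∀ t s x ω, C (t + s) x ω = C s (C t x ω) (T t ω))
    (xbar : Ω → X)
    (M : ℝ≥0) (hM : 0 < M) (a : X)
    (c : ℝ) (hc : c < 0)
    (hsub : ∀ᵐ ω ∂μ, limsup (fun n : ℕ =>
      Real.log (dist (C ((n : ℝ≥0) * M) a ω) (xbar (T ((n : ℝ≥0) * M) ω))) /
        ((n : ℝ) * (M : ℝ))) atTop ≤ c)
    (H κ : Ω → ℝ)
    (hHpos : ∀ ω, 0 < H ω) (hκpos : ∀ ω, 0 < κ ω)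
    (hHint : Integrable (fun ω => Real.log (H ω)) μ)
    (hκint : Integrable (fun ω => Real.log (κ ω)) μ)
    (b : ℝ) (hb : 0 < b)
    (hHolder : ∀ᵐ ω ∂μ, ∀ n : ℕ, ∀ x : X,
      dist x (xbar (T ((n : ℝ≥0) * M) ω)) ≤ κ (T ((n : ℝ≥0) * M) ω) → ∀ t ≤ M,
        dist (C t x (T ((n : ℝ≥0) * M) ω)) (xbar (T t (T ((n : ℝ≥0) * M) ω))) ≤
          H (T ((n : ℝ≥0) * M) ω) * dist x (xbar (T ((n : ℝ≥0) * M) ω)) ^ b) :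
    ∀ᵐ ω ∂μ, limsup (fun t : ℝ≥0 =>
      Real.log (dist (C t a ω) (xbar (T t ω))) / (t : ℝ)) atTop ≤ b * c := by
  have hTnM : ∀ n : ℕ, MeasurePreserving (T (n * M)) μ μ := fun n => hTmp _
  filter_upwards [hsub, hHolder, ae_isLittleO_natCast_of_measurePreserving hTnM hHint,
    ae_isLittleO_natCast_of_measurePreserving hTnM hκint] with ω hsubω hHolω hHω hκω
  -- The Hölder bound at `x = xbar` forces `xbar` to be invariant along each block.
  have hinv : ∀ n : ℕ, ∀ r ≤ M, C r (xbar (T (n * M) ω)) (T (n * M) ω) =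
      xbar (T r (T (n * M) ω)) := fun n r hr =>
    dist_le_zero.1 <| by
      simpa [hb.ne'] using hHolω n _ ((dist_self _).trans_le (hκpos _).le) r hr
  have hpos := dist_pos_of_limsup_log_dist_ne_zero hTadd hCadd hM hinv (hsubω.trans_lt hc).ne
  refine limsup_div_le_mul_of_blockwise_holder
    (ℓ := fun t => Real.log (dist (C t a ω) (xbar (T t ω)))) hM hb hc hHω hκω hsubω
    fun n hn s hs => ?_
  have hρ := hpos (n * M)
  have hdist := hHolω n _ ((Real.log_le_log_iff hρ (hκpos _)).1 hn) s hs
  rw [← hCadd, ← Function.comp_apply (f := T s), ← hTadd] at hdist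
  calc Real.log (dist (C (n * M + s) a ω) (xbar (T (n * M + s) ω)))
      ≤ Real.log (H (T (n * M) ω) * dist (C (n * M) a ω) (xbar (T (n * M) ω)) ^ b) :=
        Real.log_le_log (hpos _) hdist
    _ = _ := by
        rw [Real.log_mul (hHpos _).ne' (Real.rpow_pos_of_pos hρ b).ne', Real.log_rpow hρ]

/-- Interpolation lemma for Theorem 2: exponential convergence along the subsequence
`t(n) = nM`, together with the Hölder bound on the intermediate times, yields exponential
convergence (with rate `bc`) along all times. -/
theorem stmt12 {Ω : Type*} [MeasurableSpace Ω] (μ : Measure Ω) [IsProbabilityMeasure μ]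
    {X : Type*} [MetricSpace X]
    (T : ℝ≥0 → Ω → Ω) (hTmp : ∀ t, MeasurePreserving (T t) μ μ)
    (hT0 : T 0 = id) (hTadd : ∀ t s, T (t + s) = T s ∘ T t)
    (C : ℝ≥0 → X → Ω → X) (hC0 : ∀ x ω, C 0 x ω = x)
    (hCadd : ∀ t s x ω, C (t + s) x ω = C s (C t x ω) (T t ω))
    (xbar : Ω → X)
    (M : ℝ≥0) (hM : 0 < M) (a : X)
    (c : ℝ) (hc : c < 0)
    (hsub : ∀ᵐ ω ∂μ, limsup (fun n : ℕ =>
      Real.log (dist (C ((n : ℝ≥0) * M) a ω) (xbar (T ((n : ℝ≥0) * M) ω))) /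
        ((n : ℝ) * (M : ℝ))) atTop ≤ c)
    (H κ : Ω → ℝ) (hHmeas : Measurable H) (hκmeas : Measurable κ)
    (hHpos : ∀ ω, 0 < H ω) (hκpos : ∀ ω, 0 < κ ω)
    (hHint : Integrable (fun ω => Real.log (H ω)) μ)
    (hκint : Integrable (fun ω => Real.log (κ ω)) μ)
    (b : ℝ) (hb : 0 < b)
    (hHolder : ∀ᵐ ω ∂μ, ∀ n : ℕ, ∀ x : X,
      dist x (xbar (T ((n : ℝ≥0) * M) ω)) ≤ κ (T ((n : ℝ≥0) * M) ω) → ∀ t ≤ M,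
        dist (C t x (T ((n : ℝ≥0) * M) ω)) (xbar (T t (T ((n : ℝ≥0) * M) ω))) ≤
          H (T ((n : ℝ≥0) * M) ω) * dist x (xbar (T ((n : ℝ≥0) * M) ω)) ^ b) :
    ∀ᵐ ω ∂μ, limsup (fun t : ℝ≥0 =>
      Real.log (dist (C t a ω) (xbar (T t ω))) / (t : ℝ)) atTop ≤ b * c :=
  stmt12_general μ T hTmp hTadd C hCadd xbar M hM a c hc hsub H κ hHpos hκpos hHint hκint b hb
    hHolder
end

section
/- (Existence and uniqueness of the generalized Kelly rule). Let (F_t) be a filtration with T^{-1}(Γ)∈F_{t+1} ⟺ Γ∈F_t, let R(ω) be an F-adapted Δ-valued random vector (Δ the unit simplex in ℝ^K), and let r∈(0,1). Then the equation r·E_0[λ*(Tω)] + (1−r)·E_0[R(Tω)] = λ*(ω) (a.s.), where E_0 = E(·|F_0), has a unique F_0-measurable Δ-valued solution λ*. -/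
open MeasureTheory Filter Set Function

/-!
In `L¹`, the map `Φ λ = r E₀[λ ∘ T] + (1 - r) E₀[R ∘ T]` is a contraction with factor `r`:
composition with the measure preserving `T` is an isometry and conditional expectation is
`L¹`-nonexpansive. Conditional expectation keeps values in a closed convex set, so `Φ` maps the
closed set of a.e. `Δ`-valued classes into itself, and Banach's fixed point theorem gives a fixed
point there, unique in all of `L¹`. Its `F₀`-measurable representatives, corrected on a null set to
be `Δ`-valued everywhere, are exactly the solutions of the equation.
-/

namespace MeasureTheory

theorem Lp.isClosed_setOf_ae_mem {α E : Type*} {m0 : MeasurableSpace α} {μ : Measure α}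
    [NormedAddCommGroup E] {p : ENNReal} [Fact (1 ≤ p)] {C : Set E} (hC : IsClosed C) :
    IsClosed {f : Lp E p μ | ∀ᵐ x ∂μ, f x ∈ C} := by
  refine isClosed_of_closure_subset fun f hf => ?_
  obtain ⟨u, hu, hlim⟩ := mem_closure_iff_seq_limit.mp hf
  obtain ⟨ns, -, hns⟩ := (tendstoInMeasure_of_tendsto_Lp hlim).exists_seq_tendsto_ae
  filter_upwards [hns, ae_all_iff.2 fun n => hu (ns n)] with x hx hxC
  exact hC.mem_of_tendsto hx (Eventually.of_forall hxC)

theorem exists_measurable_forall_mem_ae_eq {α E : Type*} {m m0 : MeasurableSpace α}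
    {μ : Measure α} [MeasurableSpace E] {C : Set E} (hC : MeasurableSet C) {g h : α → E}
    (hg : Measurable[m] g) (hh : Measurable[m] h) (hhC : ∀ x, h x ∈ C)
    (hgC : ∀ᵐ x ∂μ, g x ∈ C) :
    ∃ l : α → E, Measurable[m] l ∧ (∀ x, l x ∈ C) ∧ l =ᵐ[μ] g := by
  classical
  refine ⟨fun x => if g x ∈ C then g x else h x, Measurable.ite (hg hC) hg hh,
    fun x => ?_, ?_⟩
  · by_cases hx : g x ∈ C <;> simp [hx, hhC x]
  · filter_upwards [hgC] with x hx
    simp [hx]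

section CondExpComp

variable {Ω E : Type*} {m m0 : MeasurableSpace Ω} {μ : Measure Ω} [NormedAddCommGroup E]
  [NormedSpace ℝ E] [CompleteSpace E] {T : Ω → Ω}

theorem norm_condExpL1CLM_le (hm : m ≤ m0) [SigmaFinite (μ.trim hm)] :
    ‖condExpL1CLM E hm μ‖ ≤ 1 :=
  L1.norm_setToL1_le _ zero_le_one

noncomputable def condExpCompL1 (hm : m ≤ m0) [SigmaFinite (μ.trim hm)]
    (hT : MeasurePreserving T μ μ) : (Ω →₁[μ] E) →L[ℝ] Ω →₁[μ] E :=
  (condExpL1CLM E hm μ).comp (Lp.compMeasurePreservingₗᵢ ℝ T hT).toContinuousLinearMap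

variable (hm : m ≤ m0) [SigmaFinite (μ.trim hm)] (hT : MeasurePreserving T μ μ)

theorem norm_condExpCompL1_le : ‖(condExpCompL1 hm hT : (Ω →₁[μ] E) →L[ℝ] Ω →₁[μ] E)‖ ≤ 1 :=
  (ContinuousLinearMap.opNorm_comp_le _ _).trans <|
    mul_le_one₀ (norm_condExpL1CLM_le hm) (norm_nonneg _)
      (LinearIsometry.norm_toContinuousLinearMap_le _)

theorem condExpCompL1_ae_eq (F : Ω →₁[μ] E) :
    ⇑(condExpCompL1 hm hT F) =ᵐ[μ] μ[fun ω => F (T ω)|m] := by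
  have h := condExp_ae_eq_condExpL1CLM hm (L1.integrable_coeFn (Lp.compMeasurePreserving T hT F))
  rw [Integrable.toL1_coeFn] at h
  exact h.symm.trans (condExp_congr_ae (Lp.coeFn_compMeasurePreserving F hT))

end CondExpComp

end MeasureTheory

section Kelly

variable {Ω E : Type*} {m m0 : MeasurableSpace Ω} {μ : Measure Ω} [NormedAddCommGroup E]
  [NormedSpace ℝ E] [CompleteSpace E] {T : Ω → Ω}
  (hm : m ≤ m0) [SigmaFinite (μ.trim hm)] (hT : MeasurePreserving T μ μ)

noncomputable def kellyMap (r : ℝ) (R F : Ω →₁[μ] E) : Ω →₁[μ] E :=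
  r • condExpCompL1 hm hT F + (1 - r) • condExpCompL1 hm hT R

theorem kellyMap_ae_eq (r : ℝ) (R F : Ω →₁[μ] E) :
    ⇑(kellyMap hm hT r R F) =ᵐ[μ]
      fun ω => r • μ[fun ω' => F (T ω')|m] ω + (1 - r) • μ[fun ω' => R (T ω')|m] ω := by
  filter_upwards [Lp.coeFn_add (r • condExpCompL1 hm hT F) ((1 - r) • condExpCompL1 hm hT R),
    Lp.coeFn_smul r (condExpCompL1 hm hT F), Lp.coeFn_smul (1 - r) (condExpCompL1 hm hT R),
    condExpCompL1_ae_eq hm hT F, condExpCompL1_ae_eq hm hT R] with ω h1 h2 h3 h4 h5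
  simp only [kellyMap, h1, Pi.add_apply, h2, h3, Pi.smul_apply, h4, h5]

theorem isFixedPt_kellyMap_toL1_iff {r : ℝ} {R f : Ω → E} (hR : Integrable R μ)
    (hf : Integrable f μ) :
    IsFixedPt (kellyMap hm hT r (hR.toL1 R)) (hf.toL1 f) ↔
      ∀ᵐ ω ∂μ, r • μ[fun ω' => f (T ω')|m] ω + (1 - r) • μ[fun ω' => R (T ω')|m] ω = f ω := by
  have hcomp {g : Ω → E} (hg : Integrable g μ) :
      μ[fun ω' => hg.toL1 g (T ω')|m] =ᵐ[μ] μ[fun ω' => g (T ω')|m] :=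
    condExp_congr_ae (hT.quasiMeasurePreserving.ae_eq hg.coeFn_toL1)
  rw [IsFixedPt, Lp.ext_iff, (kellyMap_ae_eq hm hT r _ _).congr_left,
    hf.coeFn_toL1.congr_right]
  refine EventuallyEq.congr_left ?_
  filter_upwards [hcomp hf, hcomp hR] with ω h1 h2
  simp only [h1, h2]

theorem contractingWith_kellyMap {r : ℝ} (hr0 : 0 ≤ r) (hr1 : r < 1) (R : Ω →₁[μ] E) :
    ContractingWith ⟨r, hr0⟩ (kellyMap hm hT r R) := by
  refine ⟨by exact_mod_cast hr1, LipschitzWith.of_dist_le_mul fun F G => ?_⟩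
  calc dist (kellyMap hm hT r R F) (kellyMap hm hT r R G)
      = r * dist (condExpCompL1 hm hT F) (condExpCompL1 hm hT G) := by
        rw [kellyMap, kellyMap, dist_add_right, dist_smul₀, Real.norm_of_nonneg hr0]
    _ ≤ r * (‖(condExpCompL1 hm hT : (Ω →₁[μ] E) →L[ℝ] Ω →₁[μ] E)‖ * dist F G) := by
        gcongr; exact (condExpCompL1 hm hT).dist_le_opNorm F G
    _ ≤ r * dist F G := by
        gcongr; exact mul_le_of_le_one_left dist_nonneg (norm_condExpCompL1_le hm hT)

theorem mapsTo_kellyMap {C : Set E} (hC : IsClosed C) (hCc : Convex ℝ C) {r : ℝ} (hr0 : 0 ≤ r)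
    (hr1 : r ≤ 1) {R : Ω →₁[μ] E} (hR : ∀ᵐ ω ∂μ, R ω ∈ C) :
    MapsTo (kellyMap hm hT r R) {F | ∀ᵐ ω ∂μ, F ω ∈ C} {F | ∀ᵐ ω ∂μ, F ω ∈ C} := fun F hF => by
  have hmem {G : Ω →₁[μ] E} (hG : ∀ᵐ ω ∂μ, G ω ∈ C) : ∀ᵐ ω ∂μ, μ[fun ω' => G (T ω')|m] ω ∈ C :=
    hCc.condExp_mem hm (hT.integrable_comp_of_integrable (L1.integrable_coeFn G)) hC
      (hT.quasiMeasurePreserving.ae hG)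
  filter_upwards [kellyMap_ae_eq hm hT r R F, hmem hF, hmem hR] with ω h hFω hRω
  rw [h]
  exact hCc hFω hRω hr0 (by linarith) (by ring)

theorem aestronglyMeasurable_of_isFixedPt_kellyMap {r : ℝ} {R F : Ω →₁[μ] E}
    (hF : IsFixedPt (kellyMap hm hT r R) F) : AEStronglyMeasurable[m] F μ := by
  refine ⟨fun ω => r • μ[fun ω' => F (T ω')|m] ω + (1 - r) • μ[fun ω' => R (T ω')|m] ω,
    (stronglyMeasurable_condExp.const_smul r).add (stronglyMeasurable_condExp.const_smul (1 - r)),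
    ?_⟩
  simpa only [hF.eq] using kellyMap_ae_eq hm hT r R F

end Kelly

theorem stmt15_general {Ω : Type*} [m0 : MeasurableSpace Ω] (μ : Measure Ω) [IsProbabilityMeasure μ]
    (T : Ω → Ω) (hT : MeasurePreserving T μ μ)
    (𝓕 : ℕ → MeasurableSpace Ω) (hle : ∀ t, 𝓕 t ≤ m0)
    (K : ℕ)
    (R : Ω → Fin K → ℝ) (hRmeas : Measurable[𝓕 0] R)
    (hRΔ : ∀ ω, R ω ∈ stdSimplex ℝ (Fin K))
    (r : ℝ) (hr0 : 0 < r) (hr1 : r < 1) :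
    ∃ l : Ω → Fin K → ℝ, Measurable[𝓕 0] l ∧ (∀ ω, l ω ∈ stdSimplex ℝ (Fin K)) ∧
      (∀ᵐ ω ∂μ,
        r • (μ[fun ω' => l (T ω')|𝓕 0]) ω + (1 - r) • (μ[fun ω' => R (T ω')|𝓕 0]) ω = l ω) ∧
      ∀ l' : Ω → Fin K → ℝ, Measurable[𝓕 0] l' → (∀ ω, l' ω ∈ stdSimplex ℝ (Fin K)) →
        (∀ᵐ ω ∂μ,
          r • (μ[fun ω' => l' (T ω')|𝓕 0]) ω + (1 - r) • (μ[fun ω' => R (T ω')|𝓕 0]) ω = l' ω) →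
        l' =ᵐ[μ] l := by
  have hm := hle 0
  have hint {f : Ω → Fin K → ℝ} (hf : Measurable[𝓕 0] f) (hfΔ : ∀ ω, f ω ∈ stdSimplex ℝ (Fin K)) :
      Integrable f μ :=
    .of_bound (hf.mono hm le_rfl).aestronglyMeasurable 1 <| .of_forall fun ω =>
      mem_closedBall_zero_iff.1 (stdSimplex_subset_closedBall (hfΔ ω))
  have hRint := hint hRmeas hRΔ
  have hΦ := contractingWith_kellyMap hm hT hr0.le hr1 (hRint.toL1 R)
  have hRS : ∀ᵐ ω ∂μ, hRint.toL1 R ω ∈ stdSimplex ℝ (Fin K) :=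
    hRint.coeFn_toL1.mono fun ω h => h ▸ hRΔ ω
  have hΦS := mapsTo_kellyMap hm hT (isClosed_stdSimplex ℝ (Fin K)) (convex_stdSimplex ℝ (Fin K))
    hr0.le hr1.le hRS
  obtain ⟨F, hFΔ, hF, -⟩ := ContractingWith.exists_fixedPoint'
    (Lp.isClosed_setOf_ae_mem (isClosed_stdSimplex ℝ (Fin K))).isComplete hΦS (hΦ.restrict hΦS)
    hRS (edist_ne_top _ _)
  obtain ⟨g, hgm, hFg⟩ := aestronglyMeasurable_of_isFixedPt_kellyMap hm hT hF
  have hgΔ : ∀ᵐ ω ∂μ, g ω ∈ stdSimplex ℝ (Fin K) := by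
    filter_upwards [hFΔ, hFg] with ω hω h
    rwa [← h]
  obtain ⟨l, hlm, hlΔ, hlg⟩ := exists_measurable_forall_mem_ae_eq
    (isClosed_stdSimplex ℝ (Fin K)).measurableSet hgm.measurable hRmeas hRΔ hgΔ
  have hlint := hint hlm hlΔ
  have hlF : hlint.toL1 l = F := Lp.ext (hlint.coeFn_toL1.trans (hlg.trans hFg.symm))
  have hsol := (isFixedPt_kellyMap_toL1_iff hm hT hRint hlint).1 (hlF ▸ hF)
  refine ⟨l, hlm, hlΔ, hsol, fun l' hl'm hl'Δ hl' => ?_⟩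
  have hl'int := hint hl'm hl'Δ
  exact (Integrable.toL1_eq_toL1_iff _ _ hl'int hlint).1 <| hΦ.fixedPoint_unique'
    ((isFixedPt_kellyMap_toL1_iff hm hT hRint hl'int).2 hl')
    ((isFixedPt_kellyMap_toL1_iff hm hT hRint hlint).2 hsol)

/-- Existence and uniqueness of the generalized Kelly rule `λ*`, the `F_0`-measurable
simplex-valued solution of `r E_0[λ*(T·)] + (1−r) E_0[R(T·)] = λ*`. -/
theorem stmt15 {Ω : Type*} [m0 : MeasurableSpace Ω] (μ : Measure Ω) [IsProbabilityMeasure μ]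
    (T : Ω → Ω) (hT : MeasurePreserving T μ μ)
    (𝓕 : ℕ → MeasurableSpace Ω) (hle : ∀ t, 𝓕 t ≤ m0) (hmono : Monotone 𝓕)
    (hcompat : ∀ (t : ℕ) (s : Set Ω), MeasurableSet[𝓕 (t + 1)] (T ⁻¹' s) ↔ MeasurableSet[𝓕 t] s)
    (K : ℕ) [NeZero K]
    (R : Ω → Fin K → ℝ) (hRmeas : Measurable[𝓕 0] R)
    (hRΔ : ∀ ω, R ω ∈ stdSimplex ℝ (Fin K))
    (r : ℝ) (hr0 : 0 < r) (hr1 : r < 1) :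
    ∃ l : Ω → Fin K → ℝ, Measurable[𝓕 0] l ∧ (∀ ω, l ω ∈ stdSimplex ℝ (Fin K)) ∧
      (∀ᵐ ω ∂μ,
        r • (μ[fun ω' => l (T ω')|𝓕 0]) ω + (1 - r) • (μ[fun ω' => R (T ω')|𝓕 0]) ω = l ω) ∧
      ∀ l' : Ω → Fin K → ℝ, Measurable[𝓕 0] l' → (∀ ω, l' ω ∈ stdSimplex ℝ (Fin K)) →
        (∀ᵐ ω ∂μ,
          r • (μ[fun ω' => l' (T ω')|𝓕 0]) ω + (1 - r) • (μ[fun ω' => R (T ω')|𝓕 0]) ω = l' ω) →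
        l' =ᵐ[μ] l :=
  stmt15_general (m0 := m0) μ T hT 𝓕 hle K R hRmeas hRΔ r hr0 hr1
end

section
/- (Lipschitz bound for the wealth-ratio map). Fix ω, vectors λ, λ* in the interior of the simplex Δ⊂ℝ^K with min_k λ*_k = ζ > 0, and a Δ-valued vector μ with ∑_k μ_k = 1 and μ_k ≥ 0. Define for x ≥ 0: f(x) = x·[∑_k μ_k λ_k/(λ_k x + λ*_k)] / [∑_k ν_k λ*_k/(λ_k x + λ*_k)], where ν∈Δ as well. Then for 0 < x ≤ 1, 0 < f(x)/x ≤ 2ζ^{-2}. -/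
/-!
`f(x)/x` is the ratio of two weighted averages over the simplex, so it suffices to bound
their terms. Since `λ_k ≤ 1`, each numerator term satisfies `λ_k / (λ_k x + λ*_k) ≤ λ_k / λ*_k ≤ 1/ζ`, and
for `x ≤ 1` the denominator `λ_k x + λ*_k` is at most `2`, so each denominator term is at least
`λ*_k / 2 ≥ ζ / 2`. Hence `f(x)/x ≤ (1/ζ) / (ζ/2) = 2/ζ²`.
-/

open Finset

section WeightedSum

variable {𝕜 ι : Type*} [Field 𝕜] [LinearOrder 𝕜] [IsStrictOrderedRing 𝕜] [Fintype ι]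
  {w f : ι → 𝕜} {c : 𝕜}

theorem sum_mul_le_of_mem_stdSimplex (hw : w ∈ stdSimplex 𝕜 ι) (hf : ∀ i, f i ≤ c) :
    ∑ i, w i * f i ≤ c :=
  calc ∑ i, w i * f i ≤ ∑ i, w i * c :=
        sum_le_sum fun i _ => mul_le_mul_of_nonneg_left (hf i) (hw.1 i)
    _ = c := by rw [← sum_mul, hw.2, one_mul]

theorem le_sum_mul_of_mem_stdSimplex (hw : w ∈ stdSimplex 𝕜 ι) (hf : ∀ i, c ≤ f i) :
    c ≤ ∑ i, w i * f i :=
  calc c = ∑ i, w i * c := by rw [← sum_mul, hw.2, one_mul]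
    _ ≤ ∑ i, w i * f i :=
        sum_le_sum fun i _ => mul_le_mul_of_nonneg_left (hf i) (hw.1 i)

theorem exists_pos_of_mem_stdSimplex (hw : w ∈ stdSimplex 𝕜 ι) : ∃ i, 0 < w i := by
  by_contra! h
  have : ∑ i, w i ≤ 0 := sum_nonpos fun i _ => h i
  linarith [hw.2]

theorem sum_mul_pos_of_mem_stdSimplex (hw : w ∈ stdSimplex 𝕜 ι) (hf : ∀ i, 0 < f i) :
    0 < ∑ i, w i * f i := by
  obtain ⟨i, hi⟩ := exists_pos_of_mem_stdSimplex hw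
  exact sum_pos' (fun j _ => mul_nonneg (hw.1 j) (hf j).le) ⟨i, mem_univ i, mul_pos hi (hf i)⟩

end WeightedSum

section WealthRatioTerms

variable {𝕜 : Type*} [Field 𝕜] [LinearOrder 𝕜] [IsStrictOrderedRing 𝕜] {a b x ζ : 𝕜}

theorem div_mul_add_le_one_div (ha : a ∈ Set.Icc (0 : 𝕜) 1) (hx : 0 ≤ x) (hζ : 0 < ζ)
    (hb : ζ ≤ b) : a / (a * x + b) ≤ 1 / ζ :=
  calc a / (a * x + b) ≤ a / b :=
        div_le_div_of_nonneg_left ha.1 (hζ.trans_le hb)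
          (le_add_of_nonneg_left (mul_nonneg ha.1 hx))
    _ ≤ 1 / b := div_le_div_of_nonneg_right ha.2 (hζ.trans_le hb).le
    _ ≤ 1 / ζ := one_div_le_one_div_of_le hζ hb

theorem half_le_div_mul_add (ha : a ∈ Set.Icc (0 : 𝕜) 1) (hx : x ∈ Set.Icc (0 : 𝕜) 1)
    (hζ : 0 < ζ) (hb : ζ ≤ b) (hb1 : b ≤ 1) : ζ / 2 ≤ b / (a * x + b) := by
  have hax : a * x ≤ 1 := mul_le_one₀ ha.2 hx.1 hx.2
  calc ζ / 2 ≤ b / 2 := by linarith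
    _ ≤ b / (a * x + b) :=
        div_le_div_of_nonneg_left (hζ.le.trans hb)
          (add_pos_of_nonneg_of_pos (mul_nonneg ha.1 hx.1) (hζ.trans_le hb)) (by linarith)

end WealthRatioTerms

theorem stmt18_general (K : ℕ)
    (lam lams muv nu : Fin K → ℝ) (ζ : ℝ)
    (hlamΔ : lam ∈ stdSimplex ℝ (Fin K)) (hlamsΔ : lams ∈ stdSimplex ℝ (Fin K))
    (hlampos : ∀ k, 0 < lam k)
    (hζpos : 0 < ζ) (hζ : ∀ k, ζ ≤ lams k)
    (hμΔ : muv ∈ stdSimplex ℝ (Fin K)) (hνΔ : nu ∈ stdSimplex ℝ (Fin K)) :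
    ∀ x : ℝ, 0 < x → x ≤ 1 →
      0 < (x * (∑ k, muv k * (lam k / (lam k * x + lams k))) /
            (∑ k, nu k * (lams k / (lam k * x + lams k)))) / x ∧
      (x * (∑ k, muv k * (lam k / (lam k * x + lams k))) /
            (∑ k, nu k * (lams k / (lam k * x + lams k)))) / x ≤ 2 / ζ ^ 2 := by
  intro x hx hx1
  have hlam := mem_Icc_of_mem_stdSimplex hlamΔ
  have hnum_le : ∑ k, muv k * (lam k / (lam k * x + lams k)) ≤ 1 / ζ :=
    sum_mul_le_of_mem_stdSimplex hμΔ fun k => div_mul_add_le_one_div (hlam k) hx.le hζpos (hζ k)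
  have hden_ge : ζ / 2 ≤ ∑ k, nu k * (lams k / (lam k * x + lams k)) :=
    le_sum_mul_of_mem_stdSimplex hνΔ fun k => half_le_div_mul_add (hlam k) ⟨hx.le, hx1⟩ hζpos
      (hζ k) (mem_Icc_of_mem_stdSimplex hlamsΔ k).2
  have hnum_pos : 0 < ∑ k, muv k * (lam k / (lam k * x + lams k)) :=
    sum_mul_pos_of_mem_stdSimplex hμΔ fun k =>
      div_pos (hlampos k) (add_pos (mul_pos (hlampos k) hx) (hζpos.trans_le (hζ k)))
  have hden_pos : 0 < ∑ k, nu k * (lams k / (lam k * x + lams k)) := by linarith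
  rw [mul_div_assoc, mul_div_cancel_left₀ _ hx.ne']
  refine ⟨div_pos hnum_pos hden_pos, ?_⟩
  calc _ ≤ (1 / ζ) / (ζ / 2) := div_le_div₀ (by positivity) hnum_le (by positivity) hden_ge
    _ = 2 / ζ ^ 2 := by field_simp

/-- Lipschitz bound for the wealth-ratio map: with `λ, λ*` interior points of the simplex,
`ζ ≤ min_k λ*_k`, and simplex-valued weight vectors `μ, ν`, the map
`f(x) = x·[Σ μ_k λ_k/(λ_k x + λ*_k)]/[Σ ν_k λ*_k/(λ_k x + λ*_k)]`
satisfies `0 < f(x)/x ≤ 2ζ⁻²` for `0 < x ≤ 1`. -/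
theorem stmt18 (K : ℕ) [NeZero K]
    (lam lams muv nu : Fin K → ℝ) (ζ : ℝ)
    (hlamΔ : lam ∈ stdSimplex ℝ (Fin K)) (hlamsΔ : lams ∈ stdSimplex ℝ (Fin K))
    (hlampos : ∀ k, 0 < lam k) (hlamspos : ∀ k, 0 < lams k)
    (hζpos : 0 < ζ) (hζ : ∀ k, ζ ≤ lams k)
    (hμΔ : muv ∈ stdSimplex ℝ (Fin K)) (hνΔ : nu ∈ stdSimplex ℝ (Fin K)) :
    ∀ x : ℝ, 0 < x → x ≤ 1 →
      0 < (x * (∑ k, muv k * (lam k / (lam k * x + lams k))) /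
            (∑ k, nu k * (lams k / (lam k * x + lams k)))) / x ∧
      (x * (∑ k, muv k * (lam k / (lam k * x + lams k))) /
            (∑ k, nu k * (lams k / (lam k * x + lams k)))) / x ≤ 2 / ζ ^ 2 :=
  stmt18_general K lam lams muv nu ζ hlamΔ hlamsΔ hlampos hζpos hζ hμΔ hνΔ
end

section
/- (Markovian sufficient condition for conditional linear independence, (K2)). Let (s_t) be a stationary Markov process on a measurable space S generating the filtration (F_t), with transition function π(s,dσ) = p(s,σ)π(dσ) where 0 < v ≤ p(s,σ) ≤ V. Let R(s)∈Δ depend on s_0 only and assume R_1,...,R_K are conditionally linearly independent given F_0. Let μ(s) be the Δ-valued solution of rE_0 μ(s_1) + (1−r)R(s_0) = μ(s_0) a.s., r∈(0,1). Then: if α(s^0)=(α_1,...,α_K) is F_0-measurable with ⟨α(s^0), μ(s_1)⟩ = 0 a.s., then α = 0 a.s. -/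
open MeasureTheory

set_option maxHeartbeats 2000000

/-- Markovian sufficient condition for (K2): if the stationary Markov process `(s_t)` has a
transition density `p` with `0 < v ≤ p ≤ V`, the coordinates of `R(s_1)` are conditionally
linearly independent given `F_0`, and `μ` solves `r E_0 μ(s_1) + (1−r)R(s_0) = μ(s_0)`, then
any `F_0`-measurable `α` with `⟨α, μ(s_1)⟩ = 0` a.s. vanishes a.s. -/
theorem stmt19 {Ω : Type*} [m0 : MeasurableSpace Ω] (μ : Measure Ω) [IsProbabilityMeasure μ]
    {S : Type*} [MeasurableSpace S]
    (s : ℤ → Ω → S) (hs : ∀ t, Measurable (s t))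
    (T : Ω → Ω) (hT : MeasurePreserving T μ μ) (hshift : ∀ t ω, s t (T ω) = s (t + 1) ω)
    (𝓕 : ℤ → MeasurableSpace Ω)
    (h𝓕 : ∀ t, 𝓕 t = ⨆ i ≤ t, MeasurableSpace.comap (s i) inferInstance)
    (hle : ∀ t, 𝓕 t ≤ m0)
    (π : Measure S) [IsProbabilityMeasure π]
    (p : S → S → ℝ) (hp : Measurable (Function.uncurry p))
    (v V : ℝ) (hv : 0 < v) (hpbound : ∀ x σ, v ≤ p x σ ∧ p x σ ≤ V)
    -- Markov property with transition density p with respect to π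
    (hMarkov : ∀ (t : ℤ) (g : S → ℝ), Measurable g → (∀ σ, |g σ| ≤ 1) →
      μ[fun ω => g (s (t + 1) ω)|𝓕 t] =ᵐ[μ] fun ω => ∫ σ, g σ * p (s t ω) σ ∂π)
    (K : ℕ) [NeZero K]
    (R : S → Fin K → ℝ) (hR : Measurable R) (hRΔ : ∀ x, R x ∈ stdSimplex ℝ (Fin K))
    -- (i): conditional linear independence of the coordinates of R given F_0
    (hRindep : ∀ β : Ω → Fin K → ℝ, Measurable[𝓕 0] β →
      (∀ᵐ ω ∂μ, ∑ k, β ω k * R (s 1 ω) k = 0) → ∀ᵐ ω ∂μ, ∀ k, β ω k = 0)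
    (r : ℝ) (hr0 : 0 < r) (hr1 : r < 1)
    (mus : S → Fin K → ℝ) (hmus : Measurable mus) (hmusΔ : ∀ x, mus x ∈ stdSimplex ℝ (Fin K))
    -- the fixed point equation r E_0 μ(s_1) + (1−r) R(s_0) = μ(s_0)
    (hfix : ∀ᵐ ω ∂μ,
      r • (μ[fun ω' => mus (s 1 ω')|𝓕 0]) ω + (1 - r) • R (s 0 ω) = mus (s 0 ω))
    (α : Ω → Fin K → ℝ) (hα : Measurable[𝓕 0] α)
    (hort : ∀ᵐ ω ∂μ, ∑ k, α ω k * mus (s 1 ω) k = 0) :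
    ∀ᵐ ω ∂μ, ∀ k, α ω k = 0 := by
  classical
  classical
  -- basic facts
  have hΩne : Nonempty Ω := by
    by_contra h
    rw [not_nonempty_iff] at h
    have h1 : μ Set.univ = 1 := measure_univ
    rw [show (Set.univ : Set Ω) = ∅ from Set.eq_empty_of_isEmpty _, measure_empty] at h1
    exact zero_ne_one h1
  have hSne : Nonempty S := ⟨s 0 hΩne.some⟩
  have hV0 : 0 < V := lt_of_lt_of_le hv
    (le_trans (hpbound hSne.some hSne.some).1 (hpbound hSne.some hSne.some).2)
  have hα0 : Measurable α := hα.mono (hle 0) le_rfl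
  have hmusk : ∀ k, Measurable fun x => mus x k := fun k => (measurable_pi_apply k).comp hmus
  have hmus01 : ∀ x k, 0 ≤ mus x k ∧ mus x k ≤ 1 := by
    intro x k
    obtain ⟨h1, h2⟩ := hmusΔ x
    refine ⟨h1 k, ?_⟩
    calc mus x k ≤ ∑ j, mus x j := Finset.single_le_sum (fun j _ => h1 j) (Finset.mem_univ k)
    _ = 1 := h2
  have hpx : ∀ x, Measurable (p x) := fun x => hp.comp measurable_prodMk_left
  have hpnn : ∀ x σ, 0 ≤ p x σ := fun x σ => le_trans hv.le (hpbound x σ).1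
  -- the function (ω, σ) ↦ p (s 0 ω) σ is measurable
  have hps0 : Measurable fun z : Ω × S => p (s 0 z.1) z.2 :=
    hp.comp (((hs 0).comp measurable_fst).prodMk measurable_snd)
  -- integrability of p (x) on any set
  have hpint : ∀ (x : S) (B : Set S), Integrable (fun σ => p x σ) (π.restrict B) := by
    intro x B
    refine Integrable.mono' (integrable_const V) ((hpx x).aestronglyMeasurable) ?_
    filter_upwards with σ
    rw [Real.norm_eq_abs, abs_of_nonneg (hpnn x σ)]
    exact (hpbound x σ).2
  -- key computation: the joint law on rectangles
  have key : ∀ B : Set S, MeasurableSet B → ∀ A : Set Ω, MeasurableSet[𝓕 0] A →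
      μ (A ∩ s 1 ⁻¹' B)
        = ∫⁻ ω in A, (∫⁻ σ in B, ENNReal.ofReal (p (s 0 ω) σ) ∂π) ∂μ := by
    intro B hB A hA
    set g : S → ℝ := B.indicator (fun _ => (1 : ℝ)) with hg_def
    have hg : Measurable g := measurable_const.indicator hB
    have hgb : ∀ σ, |g σ| ≤ 1 := by
      intro σ
      by_cases h : σ ∈ B <;> simp [hg_def, Set.indicator, h]
    have hgcomp : (fun ω => g (s 1 ω)) = (s 1 ⁻¹' B).indicator (fun _ => (1 : ℝ)) := by
      funext ω
      by_cases h : s 1 ω ∈ B <;> simp [hg_def, Set.indicator, h, Set.mem_preimage]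
    have hgint : Integrable (fun ω => g (s 1 ω)) μ := by
      rw [hgcomp]
      exact (integrable_const (1 : ℝ)).indicator ((hs 1) hB)
    have hM := hMarkov 0 g hg hgb
    simp only [zero_add] at hM
    -- real-valued chain
    have h1 : ∫ ω in A, g (s 1 ω) ∂μ = (μ (A ∩ s 1 ⁻¹' B)).toReal := by
      rw [hgcomp, integral_indicator ((hs 1) hB), setIntegral_const, measureReal_def,
        Measure.restrict_apply ((hs 1) hB), Set.inter_comm]
      simp
    have h2 : ∫ ω in A, g (s 1 ω) ∂μ = ∫ ω in A, (∫ σ in B, p (s 0 ω) σ ∂π) ∂μ := by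
      rw [← setIntegral_condExp (hle 0) hgint hA]
      refine setIntegral_congr_ae ((hle 0) A hA) ?_
      filter_upwards [hM] with ω hω _
      rw [hω]
      rw [← integral_indicator hB]
      congr 1
      funext σ
      by_cases h : σ ∈ B <;> simp [hg_def, Set.indicator, h]
    -- measurability and integrability of the inner integral
    have hh_meas : Measurable fun ω => ∫ σ in B, p (s 0 ω) σ ∂π := by
      have : StronglyMeasurable fun z : Ω × S => p (s 0 z.1) z.2 := hps0.stronglyMeasurable
      exact (StronglyMeasurable.integral_prod_right (f := fun ω σ => p (s 0 ω) σ) this).measurable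
    have hh_nn : ∀ ω, 0 ≤ ∫ σ in B, p (s 0 ω) σ ∂π := fun ω =>
      integral_nonneg fun σ => hpnn _ σ
    have hh_bdd : ∀ ω, ∫ σ in B, p (s 0 ω) σ ∂π ≤ V := by
      intro ω
      calc ∫ σ in B, p (s 0 ω) σ ∂π ≤ ∫ _σ in B, V ∂π :=
            integral_mono (hpint _ B) (integrable_const V) (fun σ => (hpbound _ σ).2)
      _ = (π B).toReal * V := by rw [setIntegral_const, smul_eq_mul, measureReal_def]
      _ ≤ 1 * V := by
            refine mul_le_mul_of_nonneg_right ?_ hV0.le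
            exact ENNReal.toReal_le_of_le_ofReal zero_le_one (by simpa using prob_le_one)
      _ = V := one_mul V
    have hh_int : Integrable (fun ω => ∫ σ in B, p (s 0 ω) σ ∂π) (μ.restrict A) := by
      refine Integrable.mono' (integrable_const V) hh_meas.aestronglyMeasurable ?_
      filter_upwards with ω
      rw [Real.norm_eq_abs, abs_of_nonneg (hh_nn ω)]
      exact hh_bdd ω
    -- convert to lintegrals
    have hinner : ∀ ω, (∫⁻ σ in B, ENNReal.ofReal (p (s 0 ω) σ) ∂π)
        = ENNReal.ofReal (∫ σ in B, p (s 0 ω) σ ∂π) := by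
      intro ω
      rw [ofReal_integral_eq_lintegral_ofReal (hpint _ B)
        (Filter.Eventually.of_forall fun σ => hpnn _ σ)]
    have houter : ∫⁻ ω in A, ENNReal.ofReal (∫ σ in B, p (s 0 ω) σ ∂π) ∂μ
        = ENNReal.ofReal (∫ ω in A, (∫ σ in B, p (s 0 ω) σ ∂π) ∂μ) := by
      rw [ofReal_integral_eq_lintegral_ofReal hh_int
        (Filter.Eventually.of_forall fun ω => hh_nn ω)]
    calc μ (A ∩ s 1 ⁻¹' B) = ENNReal.ofReal ((μ (A ∩ s 1 ⁻¹' B)).toReal) :=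
          (ENNReal.ofReal_toReal (measure_ne_top μ _)).symm
    _ = ENNReal.ofReal (∫ ω in A, (∫ σ in B, p (s 0 ω) σ ∂π) ∂μ) := by rw [← h2, h1]
    _ = ∫⁻ ω in A, ENNReal.ofReal (∫ σ in B, p (s 0 ω) σ ∂π) ∂μ := houter.symm
    _ = ∫⁻ ω in A, (∫⁻ σ in B, ENNReal.ofReal (p (s 0 ω) σ) ∂π) ∂μ := by
          refine lintegral_congr fun ω => ?_
          rw [hinner ω]
  -- the two measures on Ω × S
  set ρ : Measure (Ω × S) :=
    (μ.prod π).withDensity (fun z => ENNReal.ofReal (p (s 0 z.1) z.2)) with hρ_def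
  have hmap : Measurable fun ω => (ω, s 1 ω) := measurable_id.prodMk (hs 1)
  set κ : Measure (Ω × S) := μ.map (fun ω => (ω, s 1 ω)) with hκ_def
  -- rectangle equality
  have hrect : ∀ (A : Set Ω) (B : Set S), MeasurableSet[𝓕 0] A → MeasurableSet B →
      ρ (A ×ˢ B) = κ (A ×ˢ B) := by
    intro A B hA hB
    have hA' : MeasurableSet A := (hle 0) A hA
    have hAB : MeasurableSet (A ×ˢ B) := hA'.prod hB
    have hκval : κ (A ×ˢ B) = μ (A ∩ s 1 ⁻¹' B) := by
      rw [hκ_def, Measure.map_apply hmap hAB]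
      congr 1
    have hρval : ρ (A ×ˢ B)
        = ∫⁻ ω in A, (∫⁻ σ in B, ENNReal.ofReal (p (s 0 ω) σ) ∂π) ∂μ := by
      rw [hρ_def, withDensity_apply _ hAB, ← Measure.prod_restrict,
        lintegral_prod _ (hps0.ennreal_ofReal.aemeasurable)]
    rw [hρval, hκval, key B hB A hA]
  -- extend to the σ-algebra (𝓕 0).prod mS via the π-system of rectangles
  have hmP : (𝓕 0).prod ‹MeasurableSpace S› ≤ (Prod.instMeasurableSpace : MeasurableSpace (Ω × S)) :=
    sup_le_sup (MeasurableSpace.comap_mono (hle 0)) le_rfl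
  have hgen : (𝓕 0).prod ‹MeasurableSpace S› = MeasurableSpace.generateFrom
      (Set.image2 (fun x1 x2 => x1 ×ˢ x2) {A : Set Ω | MeasurableSet[𝓕 0] A}
        {B : Set S | MeasurableSet B}) :=
    (@generateFrom_prod Ω S (𝓕 0) _).symm
  have hρfin : IsFiniteMeasure (ρ.trim hmP) := by
    constructor
    rw [trim_measurableSet_eq hmP (@MeasurableSet.univ _ ((𝓕 0).prod ‹MeasurableSpace S›))]
    have : ρ Set.univ ≤ ENNReal.ofReal V * (μ.prod π) Set.univ := by
      rw [hρ_def, withDensity_apply _ MeasurableSet.univ, Measure.restrict_univ,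
        ← lintegral_const]
      exact lintegral_mono fun z => ENNReal.ofReal_le_ofReal (hpbound _ _).2
    exact lt_of_le_of_lt this (by finiteness)
  have htrim_eq : ρ.trim hmP = κ.trim hmP := by
    haveI := hρfin
    refine ext_of_generate_finite _ hgen (@isPiSystem_prod Ω S (𝓕 0) _) ?_ ?_
    · rintro t ⟨A, hA, B, hB, rfl⟩
      have htm : MeasurableSet[(𝓕 0).prod ‹MeasurableSpace S›] (A ×ˢ B) := @MeasurableSet.prod Ω S (𝓕 0) _ A B hA hB
      rw [trim_measurableSet_eq hmP htm, trim_measurableSet_eq hmP htm]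
      exact hrect A B hA hB
    · rw [trim_measurableSet_eq hmP (@MeasurableSet.univ _ ((𝓕 0).prod ‹MeasurableSpace S›)),
        trim_measurableSet_eq hmP (@MeasurableSet.univ _ ((𝓕 0).prod ‹MeasurableSpace S›)),
        ← Set.univ_prod_univ]
      exact hrect _ _ (@MeasurableSet.univ Ω (𝓕 0)) MeasurableSet.univ
  -- the orthogonality set
  set N : Set (Ω × S) := {z : Ω × S | ∑ k, α z.1 k * mus z.2 k ≠ 0} with hN_def
  have hNmeas : MeasurableSet N := by
    have h1 : Measurable fun z : Ω × S => ∑ k, α z.1 k * mus z.2 k := by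
      refine Finset.measurable_sum _ fun k _ => ?_
      exact ((measurable_pi_apply k).comp (hα0.comp measurable_fst)).mul
        ((measurable_pi_apply k).comp (hmus.comp measurable_snd))
    exact (h1 (MeasurableSet.singleton 0)).compl
  have hNmP : MeasurableSet[(𝓕 0).prod ‹MeasurableSpace S›] N := by
    have h1 : Measurable[(𝓕 0).prod ‹MeasurableSpace S›] fun z : Ω × S => ∑ k, α z.1 k * mus z.2 k := by
      refine Finset.measurable_sum _ fun k _ => ?_
      exact ((measurable_pi_apply k).comp
          (hα.comp (@measurable_fst Ω S (𝓕 0) _))).mul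
        ((measurable_pi_apply k).comp (hmus.comp (@measurable_snd Ω S (𝓕 0) _)))
    exact (h1 (MeasurableSet.singleton 0)).compl
  have hκN : κ N = 0 := by
    rw [hκ_def, Measure.map_apply hmap hNmeas]
    have : (fun ω => (ω, s 1 ω)) ⁻¹' N = {ω | ¬ (∑ k, α ω k * mus (s 1 ω) k = 0)} := rfl
    rw [this, ← ae_iff]
    exact hort
  have hρN : ρ N = 0 := by
    rw [← trim_measurableSet_eq hmP hNmP, htrim_eq,
      trim_measurableSet_eq hmP hNmP, hκN]
  have hprodN : (μ.prod π) N = 0 := by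
    have hlb : ENNReal.ofReal v * (μ.prod π) N ≤ ρ N := by
      rw [hρ_def, withDensity_apply _ hNmeas, ← setLIntegral_const]
      exact setLIntegral_mono hps0.ennreal_ofReal fun z _ =>
        ENNReal.ofReal_le_ofReal (hpbound _ _).1
    rw [hρN, le_zero_iff, mul_eq_zero] at hlb
    rcases hlb with h | h
    · exact absurd h (by simp [ENNReal.ofReal_eq_zero, not_le, hv])
    · exact h
  have hslice : ∀ᵐ ω ∂μ, ∀ᵐ σ ∂π, ∑ k, α ω k * mus σ k = 0 := by
    have := (Measure.measure_prod_null hNmeas).mp hprodN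
    filter_upwards [this] with ω hω
    have : π {σ | ¬ (∑ k, α ω k * mus σ k = 0)} = 0 := by
      have hpre : Prod.mk ω ⁻¹' N = {σ | ¬ (∑ k, α ω k * mus σ k = 0)} := rfl
      rw [← hpre]
      simpa using hω
    rw [← ae_iff] at this
    exact this
  -- identify the conditional expectation coordinatewise
  set M : S → Fin K → ℝ := fun x k => ∫ σ, mus σ k * p x σ ∂π with hM_def
  set F : Ω → Fin K → ℝ := fun ω => mus (s 1 ω) with hF_def
  have hFmeas : Measurable F := hmus.comp (hs 1)
  have hFint : Integrable F μ := by
    refine Integrable.mono' (integrable_const (1 : ℝ)) hFmeas.aestronglyMeasurable ?_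
    filter_upwards with ω
    rw [pi_norm_le_iff_of_nonneg zero_le_one]
    intro k
    rw [Real.norm_eq_abs, abs_of_nonneg (hmus01 _ k).1]
    exact (hmus01 _ k).2
  have hFkint : ∀ k, Integrable (fun ω => F ω k) μ := by
    intro k
    refine Integrable.mono' hFint.norm
      (((measurable_pi_apply k).comp hFmeas).aestronglyMeasurable) ?_
    filter_upwards with ω
    exact norm_le_pi_norm (F ω) k
  have hcoord : ∀ k, (fun ω => (μ[F|𝓕 0]) ω k) =ᵐ[μ] μ[fun ω => F ω k|𝓕 0] := by
    intro k
    refine ae_eq_condExp_of_forall_setIntegral_eq (hle 0) (hFkint k) ?_ ?_ ?_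
    · intro t _ _
      refine Integrable.integrableOn ?_
      refine Integrable.mono' (integrable_condExp (f := F) (m := 𝓕 0) (μ := μ)).norm
        (((continuous_apply k).comp_stronglyMeasurable
          (stronglyMeasurable_condExp (m := 𝓕 0))).mono (hle 0)).aestronglyMeasurable ?_
      filter_upwards with ω
      exact norm_le_pi_norm ((μ[F|𝓕 0]) ω) k
    · intro t ht _
      have e1 : ∫ ω in t, (μ[F|𝓕 0]) ω k ∂μ = (∫ ω in t, (μ[F|𝓕 0]) ω ∂μ) k := by
        have := (ContinuousLinearMap.proj (R := ℝ) (φ := fun _ : Fin K => ℝ)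
          k).integral_comp_comm
          ((integrable_condExp (f := F) (m := 𝓕 0) (μ := μ)).restrict (s := t))
        simpa using this
      have e2 : ∫ ω in t, F ω k ∂μ = (∫ ω in t, F ω ∂μ) k := by
        have := (ContinuousLinearMap.proj (R := ℝ) (φ := fun _ : Fin K => ℝ)
          k).integral_comp_comm (hFint.restrict (s := t))
        simpa using this
      rw [e1, e2, setIntegral_condExp (hle 0) hFint ht]
    · exact StronglyMeasurable.aestronglyMeasurable
        ((continuous_apply k).comp_stronglyMeasurable (stronglyMeasurable_condExp (m := 𝓕 0)))
  have hMk : ∀ k, (μ[fun ω => F ω k|𝓕 0]) =ᵐ[μ] fun ω => M (s 0 ω) k := by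
    intro k
    have hb : ∀ σ, |mus σ k| ≤ 1 := by
      intro σ
      rw [abs_of_nonneg (hmus01 σ k).1]
      exact (hmus01 σ k).2
    have := hMarkov 0 (fun σ => mus σ k) (hmusk k) hb
    simp only [zero_add] at this
    exact this
  -- fixed point equation in terms of M, at time 0
  have hstar0 : ∀ᵐ ω ∂μ, ∀ k,
      r * M (s 0 ω) k + (1 - r) * R (s 0 ω) k = mus (s 0 ω) k := by
    have hco : ∀ᵐ ω ∂μ, ∀ k, (μ[F|𝓕 0]) ω k = M (s 0 ω) k :=
      ae_all_iff.mpr fun k => (hcoord k).trans (hMk k)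
    filter_upwards [hfix, hco] with ω h1 h2 k
    have h3 := congrFun h1 k
    simp only [Pi.add_apply, Pi.smul_apply, smul_eq_mul] at h3
    rw [← h2 k]
    exact h3
  -- transport to time 1
  have hstar1 : ∀ᵐ ω ∂μ, ∀ k,
      r * M (s 1 ω) k + (1 - r) * R (s 1 ω) k = mus (s 1 ω) k := by
    have := hT.quasiMeasurePreserving.ae hstar0
    filter_upwards [this] with ω h k
    have h4 := h k
    rw [hshift 0 ω] at h4
    simpa using h4
  -- orthogonality to M (s 1)
  have horthM : ∀ᵐ ω ∂μ, ∑ k, α ω k * M (s 1 ω) k = 0 := by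
    filter_upwards [hslice] with ω hω
    have hintk : ∀ k : Fin K, Integrable (fun σ => mus σ k * p (s 1 ω) σ) π := by
      intro k
      refine Integrable.mono' (integrable_const V)
        (((hmusk k).mul (hpx (s 1 ω))).aestronglyMeasurable) ?_
      filter_upwards with σ
      rw [Real.norm_eq_abs, abs_of_nonneg (mul_nonneg (hmus01 σ k).1 (hpnn _ σ))]
      calc mus σ k * p (s 1 ω) σ ≤ 1 * V :=
            mul_le_mul (hmus01 σ k).2 (hpbound _ σ).2 (hpnn _ σ) zero_le_one
      _ = V := one_mul V
    calc ∑ k, α ω k * M (s 1 ω) k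
        = ∑ k, ∫ σ, α ω k * (mus σ k * p (s 1 ω) σ) ∂π := by
          refine Finset.sum_congr rfl fun k _ => ?_
          rw [hM_def, integral_const_mul]
    _ = ∫ σ, ∑ k, α ω k * (mus σ k * p (s 1 ω) σ) ∂π :=
          (integral_finset_sum _ fun k _ => (hintk k).const_mul _).symm
    _ = ∫ σ, (∑ k, α ω k * mus σ k) * p (s 1 ω) σ ∂π := by
          congr 1
          funext σ
          rw [Finset.sum_mul]
          exact Finset.sum_congr rfl fun k _ => by ring
    _ = 0 := by
          rw [← integral_zero S ℝ (μ := π)]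
          refine integral_congr_ae ?_
          filter_upwards [hω] with σ hσ
          rw [hσ, zero_mul]
  -- conclude orthogonality to R (s 1) and apply conditional linear independence
  have hRort : ∀ᵐ ω ∂μ, ∑ k, α ω k * R (s 1 ω) k = 0 := by
    filter_upwards [hort, hstar1, horthM] with ω h0 h1 h2
    have e : ∑ k, α ω k * mus (s 1 ω) k
        = r * ∑ k, α ω k * M (s 1 ω) k + (1 - r) * ∑ k, α ω k * R (s 1 ω) k := by
      rw [Finset.mul_sum, Finset.mul_sum, ← Finset.sum_add_distrib]
      refine Finset.sum_congr rfl fun k _ => ?_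
      rw [← h1 k]
      ring
    rw [h0, h2] at e
    have : (1 - r) * ∑ k, α ω k * R (s 1 ω) k = 0 := by linarith
    rcases mul_eq_zero.mp this with h | h
    · linarith
    · exact h
  exact hRindep α hα hRort
end
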